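/- For all integers a ≥ 1, b ≥ 1 and L ≥ 0 with L ≡ a − b (mod 2), the generating function of unrestricted lattice paths satisfies G_L(∅) := Σ_{(σ_0,…,σ_{L+1})} q^{Σ_{k=1}^{L} k|σ_{k+1} − σ_{k−1}|/4} = q^{(a−b)(a−b−1)/4} [ L ; (1/2)(L + a − b) ], where the sum is over all sequences of integers (σ_0,…,σ_{L+1}) (no upper or lower bound on the σ_j) with |σ_{j+1} − σ_j| = 1 for j = 0,…,L, σ_0 = a−1, σ_L = b−1 and σ_{L+1} = b. -/

import Mathlib

attribute [local instance] Classical.propDecidable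

noncomputable section

variable {K : Type*} [Field K]

/-- `(q)_n` where `q = t^4` (the variable `t` stands for `q^{1/4}`). -/
def qp (t : K) (n : ℕ) : K :=
  ∏ k ∈ Finset.range n, (1 - t ^ (4 * (k + 1)))

/-- Gaussian polynomial `[N; m]` in the variable `q = t^4`. -/
def gauss (t : K) (N m : ℤ) : K :=
  if 0 ≤ m ∧ m ≤ N then qp t N.toNat / (qp t m.toNat * qp t (N - m).toNat) else 0

/-- Gaussian polynomial `[N2/2; m]` (zero if `N2` is odd). -/
def gaussHalf (t : K) (N2 m : ℤ) : K :=
  if N2 % 2 = 0 then gauss t (N2 / 2) m else 0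

/-- Incidence matrix of the Dynkin diagram `A_d` (indices `i : Fin d` stand for `i+1`). -/
def inc (d : ℕ) (i k : Fin d) : ℤ := if (i : ℕ) + 1 = (k : ℕ) ∨ (k : ℕ) + 1 = (i : ℕ) then 1 else 0

/-- Cartan matrix of `A_d`. -/
def cartan (d : ℕ) (i k : Fin d) : ℤ := (if i = k then 2 else 0) - inc d i k

/-- the `s`-th unit vector, with the convention `e_0 = e_{d+1} = 0`. -/
def uv (d : ℕ) (s : ℤ) (i : Fin d) : ℤ := if ((i : ℕ) : ℤ) + 1 = s then 1 else 0

/-- `m_s`, with the conventions `m_0 = m_{d+1} = 0`. -/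
def mAt (d : ℕ) (m : Fin d → ℕ) (s : ℤ) : ℤ := ∑ i, uv d s i * (m i : ℤ)

/-- `mᵀ C m` for the `A_d` Cartan matrix. -/
def quadC (d : ℕ) (m : Fin d → ℕ) : ℤ := ∑ i, ∑ k, (m i : ℤ) * cartan d i k * (m k : ℤ)

/-- the vector `Q_{a,b}`. -/
def Qab (r a b : ℕ) (i : Fin (r - 3)) : ℕ :=
  min (a - 1) (r - ((i : ℕ) + 1) - 2) + min (b - 1) (r - ((i : ℕ) + 1) - 2)

/-- the parity restriction `m ≡ Q_{a,b} (mod 2)`. -/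
def parity (r a b : ℕ) (m : Fin (r - 3) → ℕ) : Prop := ∀ i, m i % 2 = Qab r a b i % 2

/-- `(I m + L e_1 + e_{r-a-1} + e_{r-b-1})_i`. -/
def topE (r a b L : ℕ) (m : Fin (r - 3) → ℕ) (i : Fin (r - 3)) : ℤ :=
  (∑ k, inc (r - 3) i k * (m k : ℤ)) + (L : ℤ) * uv (r - 3) 1 i
    + uv (r - 3) ((r : ℤ) - a - 1) i + uv (r - 3) ((r : ℤ) - b - 1) i

/-- the summand `q^{(1/4) mᵀCm - (1/2) m_{r-a-1}} ∏_j [(1/2)(Im + Le_1 + e_{r-a-1} + e_{r-b-1})_j; m_j]`,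
in the variable `t = q^{1/4}`. -/
def fermTerm (r a b L : ℕ) (t : K) (m : Fin (r - 3) → ℕ) : K :=
  t ^ (quadC (r - 3) m - 2 * mAt (r - 3) m ((r : ℤ) - a - 1))
    * ∏ i, gaussHalf t (topE r a b L m i) (m i)

/-- the fermionic sum `Σ_{m ≡ Q_{a,b}} (⋯)`. -/
def fermSum (r a b L : ℕ) (t : K) : K :=
  ∑ᶠ m : Fin (r - 3) → ℕ, if parity r a b m then fermTerm r a b L t m else 0

/-!
A path is determined by its starting height and its `±1` steps, so the `finsum` over integer
sequences is a finite sum over step sequences. Let `G_L(A, B)` count the paths with `σ_0 = A`,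
`σ_L = B`, `σ_{L+1} = B + 1`. Removing the last step gives
`G_{L+1}(A, B) = q^{(L+1)/2} G_L(A, B - 1) + G_L(-A, -B - 1)`: if `σ_L = B - 1` the last term of
the weight is `2(L+1)/4`, and if `σ_L = B + 1` it vanishes and the reflection `σ ↦ -σ` restores
the shape `(σ_L, σ_{L+1}) = (B', B' + 1)`. The closed form obeys the same recursion by the
`q`-Pascal rule `[L+1; m] = q^m [L; m] + [L; m-1]`, where `2m = L + 1 + A - B`, together with the
symmetry `[L; m - (A - B)] = [L; m - 1]`.
-/

open Finset

theorem qp_zero (t : K) : qp t 0 = 1 := prod_range_zero _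

theorem qp_succ (t : K) (n : ℕ) : qp t (n + 1) = qp t n * (1 - t ^ (4 * (n + 1))) :=
  prod_range_succ _ _

theorem gauss_natCast (t : K) {n j : ℕ} (h : j ≤ n) :
    gauss t n j = qp t n / (qp t j * qp t (n - j)) := by
  rw [gauss, if_pos ⟨by positivity, by exact_mod_cast h⟩]
  congr 3; omega

theorem gauss_eq_zero (t : K) {N m : ℤ} (h : ¬(0 ≤ m ∧ m ≤ N)) : gauss t N m = 0 := if_neg h

theorem gauss_sub_right (t : K) (N m : ℤ) : gauss t N (N - m) = gauss t N m := by
  by_cases h : 0 ≤ m ∧ m ≤ N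
  · rw [gauss, gauss, if_pos h, if_pos (by omega), sub_sub_cancel, mul_comm]
  · rw [gauss_eq_zero t h, gauss_eq_zero t (by omega)]

theorem gauss_zero_right (t : K) {n : ℕ} (hn : qp t n ≠ 0) : gauss t n 0 = 1 := by
  rw [← Nat.cast_zero, gauss_natCast t n.zero_le, qp_zero, one_mul, Nat.sub_zero, div_self hn]

theorem gauss_self (t : K) {n : ℕ} (hn : qp t n ≠ 0) : gauss t n n = 1 := by
  rw [gauss_natCast t le_rfl, Nat.sub_self, qp_zero, mul_one, div_self hn]

theorem gauss_succ_natCast_succ (t : K) (hqp : ∀ n, qp t n ≠ 0) (i c : ℕ) :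
    gauss t ((i + c + 1 : ℕ) + 1) (i + 1 : ℕ)
      = t ^ (4 * ((i + 1 : ℕ) : ℤ)) * gauss t (i + c + 1 : ℕ) (i + 1 : ℕ)
        + gauss t (i + c + 1 : ℕ) ((i + 1 : ℕ) - 1) := by
  rw [show (4 : ℤ) * ((i + 1 : ℕ) : ℤ) = ((4 * (i + 1) : ℕ) : ℤ) by push_cast; ring, zpow_natCast,
    Nat.cast_succ i, add_sub_cancel_right, ← Nat.cast_succ, ← Nat.cast_succ,
    gauss_natCast t (by omega), gauss_natCast t (by omega), gauss_natCast t (by omega),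
    show i + c + 1 + 1 - (i + 1) = c + 1 by omega, show i + c + 1 - (i + 1) = c by omega,
    show i + c + 1 - i = c + 1 by omega, qp_succ t (i + c + 1), qp_succ t i, qp_succ t c]
  obtain ⟨hqi, hti⟩ := mul_ne_zero_iff.1 (qp_succ t i ▸ hqp (i + 1))
  obtain ⟨hqc, htc⟩ := mul_ne_zero_iff.1 (qp_succ t c ▸ hqp (c + 1))
  have hqN := hqp (i + c + 1)
  field_simp
  ring

theorem gauss_succ (t : K) (hqp : ∀ n, qp t n ≠ 0) (N : ℕ) (m : ℤ) :
    gauss t ((N : ℤ) + 1) m = t ^ (4 * m) * gauss t N m + gauss t N (m - 1) := by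
  by_cases hm : 0 ≤ m ∧ m ≤ N + 1
  swap
  · rw [gauss_eq_zero t hm, gauss_eq_zero t (by omega), gauss_eq_zero t (by omega),
      mul_zero, add_zero]
  obtain ⟨j, rfl⟩ := Int.eq_ofNat_of_zero_le hm.1
  rcases j with _ | i
  · rw [← Nat.cast_succ, Nat.cast_zero, gauss_zero_right t (hqp _), gauss_zero_right t (hqp _),
      gauss_eq_zero t (by omega), mul_zero, zpow_zero, one_mul, add_zero]
  rcases Nat.lt_or_ge i N with hiN | hiN
  · obtain ⟨c, rfl⟩ : ∃ c, N = i + c + 1 := ⟨N - i - 1, by omega⟩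
    exact gauss_succ_natCast_succ t hqp i c
  · obtain rfl : i = N := by omega
    rw [← Nat.cast_succ, gauss_self t (hqp _), gauss_eq_zero t (by omega), Nat.cast_succ,
      add_sub_cancel_right, gauss_self t (hqp _), mul_zero, zero_add]

theorem qp_X_ne_zero (n : ℕ) : qp (RatFunc.X : RatFunc ℚ) n ≠ 0 := by
  refine prod_ne_zero_iff.2 fun k _ h => ?_
  have hpoly : (Polynomial.X ^ (4 * (k + 1)) - Polynomial.C 1 : Polynomial ℚ) ≠ 0 :=
    Polynomial.X_pow_sub_C_ne_zero (by omega) 1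
  apply hpoly
  apply RatFunc.algebraMap_injective ℚ
  rw [map_zero, map_sub, map_pow, RatFunc.algebraMap_X, RatFunc.algebraMap_C, map_one,
    ← neg_sub, h, neg_zero]

theorem finsum_eq_sum_comp_of_support_subset_range {α β M : Type*} [Fintype β] [AddCommMonoid M]
    {f : α → M} {g : β → α} (hg : g.Injective) (hf : f.support ⊆ Set.range g) :
    ∑ᶠ a, f a = ∑ b, f (g b) := by
  classical
  rw [finsum_eq_sum_of_support_subset f (s := univ.image g) (by simpa using hf),
    sum_image hg.injOn]

theorem sum_pi_fin_succ_bool {M : Type*} [AddCommMonoid M] {n : ℕ} (f : (Fin (n + 1) → Bool) → M) :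
    ∑ ε, f ε = ∑ τ : Fin n → Bool, (f (Fin.snoc τ false) + f (Fin.snoc τ true)) := by
  rw [← Fintype.sum_equiv (Fin.snocEquiv fun _ => Bool) (fun p => f (Fin.snoc p.2 p.1)) f
    fun _ => rfl, Fintype.sum_prod_type, Fintype.sum_bool, ← sum_add_distrib]
  exact sum_congr rfl fun _ _ => add_comm _ _

namespace UnrestrictedPath

variable {t : K} {L : ℕ} {A B : ℤ} {s s' : ℕ → ℤ}

def extendNat {α : Type*} (d : α) {n : ℕ} (f : Fin n → α) (j : ℕ) : α :=
  if h : j < n then f ⟨j, h⟩ else d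

theorem extendNat_snoc_of_lt {α : Type*} (d : α) {n : ℕ} (τ : Fin n → α) (b : α) {j : ℕ}
    (h : j < n) : extendNat d (Fin.snoc τ b) j = extendNat d τ j := by
  rw [extendNat, extendNat, dif_pos h, dif_pos (by omega)]
  exact Fin.snoc_castSucc (i := ⟨j, h⟩) ..

theorem extendNat_snoc_last {α : Type*} (d : α) {n : ℕ} (τ : Fin n → α) (b : α) :
    extendNat d (Fin.snoc τ b) n = b := by
  rw [extendNat, dif_pos n.lt_succ_self]
  exact Fin.snoc_last (α := fun _ => α) ..

def step (b : Bool) : ℤ := if b then 1 else -1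

theorem step_injective : step.Injective := by decide

theorem abs_step (b : Bool) : |step b| = 1 := by cases b <;> rfl

def walk (A : ℤ) (ε : ℕ → Bool) : ℕ → ℤ
  | 0 => A
  | j + 1 => walk A ε j + step (ε j)

theorem walk_congr {ε ε' : ℕ → Bool} {j : ℕ} (h : ∀ i < j, ε i = ε' i) :
    walk A ε j = walk A ε' j := by
  induction j with
  | zero => rfl
  | succ j ih => rw [walk, walk, ih fun i hi => h i (by omega), h j j.lt_succ_self]

theorem walk_not (ε : ℕ → Bool) (j : ℕ) : walk (-A) (fun i => !ε i) j = -walk A ε j := by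
  induction j with
  | zero => rfl
  | succ j ih => cases h : ε j <;> simp [walk, ih, h, step] <;> ring

theorem abs_walk_succ_sub (ε : ℕ → Bool) (j : ℕ) : |walk A ε (j + 1) - walk A ε j| = 1 := by
  rw [walk, add_sub_cancel_left, abs_step]

theorem walk_injective (n : ℕ) :
    (fun (ε : Fin n → Bool) (j : Fin (n + 1)) => walk A (extendNat false ε) j).Injective := by
  intro ε ε' h
  funext i
  have hstep := congrArg₂ (· - ·) (congrFun h i.succ) (congrFun h i.castSucc)
  simp only [Fin.val_succ, Fin.val_castSucc, walk, add_sub_cancel_left] at hstep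
  simpa [extendNat] using step_injective hstep

theorem exists_walk_eq {n : ℕ} (hs : ∀ j < n, |s (j + 1) - s j| = 1) :
    ∃ ε : Fin n → Bool, ∀ j ≤ n, walk (s 0) (extendNat false ε) j = s j := by
  refine ⟨fun i => decide (s (i + 1) - s i = 1), fun j hj => ?_⟩
  induction j with
  | zero => rfl
  | succ j ih =>
    rw [walk, ih (by omega), extendNat, dif_pos (by omega)]
    rcases abs_eq (zero_le_one' ℤ) |>.1 (hs j (by omega)) with h | h <;> simp [step, h] <;> omega

def weight (L : ℕ) (s : ℕ → ℤ) : ℤ := ∑ k ∈ Icc 1 L, (k : ℤ) * |s (k + 1) - s (k - 1)|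

def pathTerm (t : K) (L : ℕ) (A B : ℤ) (s : ℕ → ℤ) : K :=
  if (∀ j, j ≤ L → |s (j + 1) - s j| = 1) ∧ s 0 = A ∧ s L = B ∧ s (L + 1) = B + 1
  then t ^ weight L s else 0

theorem weight_neg : weight L (-s) = weight L s := by
  simp only [weight, Pi.neg_apply, abs_neg, sub_eq_add_neg, ← neg_add]

theorem weight_succ : weight (L + 1) s = weight L s + (L + 1) * |s (L + 2) - s L| := by
  rw [weight, sum_Icc_succ_top (by omega), weight]
  push_cast
  rfl

theorem pathTerm_congr (h : ∀ j ≤ L + 1, s j = s' j) :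
    pathTerm t L A B s = pathTerm t L A B s' := by
  have hw : weight L s = weight L s' :=
    sum_congr rfl fun k hk => by
      obtain ⟨-, hkL⟩ := mem_Icc.1 hk
      rw [h (k + 1) (by omega), h (k - 1) (by omega)]
  have hc : (∀ j, j ≤ L → |s (j + 1) - s j| = 1) ↔ (∀ j, j ≤ L → |s' (j + 1) - s' j| = 1) :=
    forall₂_congr fun j hj => by rw [h j (by omega), h (j + 1) (by omega)]
  simp only [pathTerm, hw, hc, h 0 (by omega), h L (by omega), h (L + 1) le_rfl]

theorem pathTerm_succ_of_sub_one (hs : s (L + 2) = s (L + 1) - 1) : pathTerm t (L + 1) A B s = 0 :=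
  if_neg fun ⟨_, _, hB, hB1⟩ => by rw [show L + 1 + 1 = L + 2 from rfl] at hB1; omega

theorem pathTerm_succ_of_add_one (ht : t ≠ 0) (hs : s (L + 2) = s (L + 1) + 1) :
    pathTerm t (L + 1) A B s
      = t ^ (2 * ((L : ℤ) + 1)) * pathTerm t L A (B - 1) s + pathTerm t L (-A) (-(B + 1)) (-s) := by
  have hsteps_succ :
      (∀ j, j ≤ L + 1 → |s (j + 1) - s j| = 1) ↔ ∀ j, j ≤ L → |s (j + 1) - s j| = 1 :=
    ⟨fun h j hj => h j (by omega), fun h j hj => (Nat.le_succ_iff.1 hj).elim (h j) fun hj => by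
      subst hj; rw [show L + 1 + 1 = L + 2 from rfl, hs]; simp⟩
  have hsteps_neg : (∀ j, j ≤ L → |-s (j + 1) - -s j| = 1) ↔ ∀ j, j ≤ L → |s (j + 1) - s j| = 1 :=
    forall₂_congr fun j _ => by rw [← abs_neg, neg_sub, sub_neg_eq_add, neg_add_eq_sub]
  simp only [pathTerm, weight_succ, weight_neg, Pi.neg_apply, hsteps_succ, hsteps_neg]
  by_cases hsteps : ∀ j, j ≤ L → |s (j + 1) - s j| = 1
  swap
  · simp [hsteps]
  rw [show L + 1 + 1 = L + 2 from rfl, hs]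
  simp only [eq_true hsteps, true_and]
  rcases abs_eq (zero_le_one' ℤ) |>.1 (hsteps L le_rfl) with h | h
  · rw [show s (L + 1) + 1 - s L = 2 by omega]
    split_ifs <;> first | omega | simp [zpow_add₀ ht, mul_comm]
  · rw [show s (L + 1) + 1 - s L = 0 by omega]
    split_ifs <;> first | omega | simp

theorem pathTerm_walk (ε : ℕ → Bool) :
    pathTerm t L A B (walk A ε)
      = if walk A ε L = B ∧ walk A ε (L + 1) = B + 1 then t ^ weight L (walk A ε) else 0 := by
  simp only [pathTerm, abs_walk_succ_sub, implies_true, walk.eq_1, true_and]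

def pathGF (t : K) (L : ℕ) (A B : ℤ) : K :=
  ∑ ε : Fin (L + 1) → Bool, pathTerm t L A B (walk A (extendNat false ε))

theorem pathGF_zero : pathGF t 0 A B = if A = B then 1 else 0 := by
  rw [pathGF, sum_pi_fin_succ_bool, Fintype.sum_unique]
  simp only [pathTerm_walk, weight, Icc_eq_empty_of_lt one_pos, sum_empty, zpow_zero, walk,
    extendNat_snoc_last, step, Bool.false_eq_true, ↓reduceIte]
  split_ifs <;> first | omega | simp

theorem pathGF_succ (ht : t ≠ 0) :
    pathGF t (L + 1) A B
      = t ^ (2 * ((L : ℤ) + 1)) * pathGF t L A (B - 1) + pathGF t L (-A) (-(B + 1)) := by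
  have hreflect : pathGF t L (-A) (-(B + 1))
      = ∑ τ : Fin (L + 1) → Bool, pathTerm t L (-A) (-(B + 1)) (-walk A (extendNat false τ)) := by
    refine Fintype.sum_equiv (Equiv.piCongrRight fun _ => Equiv.boolNot) _ _ fun τ =>
      pathTerm_congr fun j hj => ?_
    rw [Pi.neg_apply, ← walk_not]
    exact walk_congr fun i hi => by simp [extendNat, hi.trans_le hj]
  rw [pathGF, sum_pi_fin_succ_bool, hreflect, pathGF, mul_sum, ← sum_add_distrib]
  refine sum_congr rfl fun τ _ => ?_
  have hinit (b : Bool) : ∀ j ≤ L + 1,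
      walk A (extendNat false (Fin.snoc τ b)) j = walk A (extendNat false τ) j :=
    fun j hj => walk_congr fun i hi => extendNat_snoc_of_lt _ τ b (by omega)
  have hlast (b : Bool) : walk A (extendNat false (Fin.snoc τ b)) (L + 2)
      = walk A (extendNat false (Fin.snoc τ b)) (L + 1) + step b := by
    rw [walk, extendNat_snoc_last]
  rw [pathTerm_succ_of_sub_one (hlast false), pathTerm_succ_of_add_one ht (hlast true), zero_add,
    pathTerm_congr (hinit true)]
  congr 1
  exact pathTerm_congr fun j hj => by rw [Pi.neg_apply, Pi.neg_apply, hinit true j hj]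

theorem pathGF_eq (ht : t ≠ 0) (hqp : ∀ n, qp t n ≠ 0) (L : ℕ) (A B : ℤ)
    (h : ((L : ℤ) - (A - B)) % 2 = 0) :
    pathGF t L A B = t ^ ((A - B) * (A - B - 1)) * gauss t L ((L + A - B) / 2) := by
  induction L generalizing A B with
  | zero =>
    rw [pathGF_zero]
    split_ifs with hAB
    · subst hAB
      simpa using (gauss_zero_right t (hqp 0)).symm
    · rw [gauss_eq_zero t (by omega), mul_zero]
  | succ L ih =>
    rw [pathGF_succ ht, ih A (B - 1) (by omega), ih (-A) (-(B + 1)) (by omega)]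
    obtain ⟨m, hm⟩ : ∃ m : ℤ, (L : ℤ) + 1 + (A - B) = 2 * m := ⟨(L + 1 + (A - B)) / 2, by omega⟩
    rw [show ((L : ℤ) + A - (B - 1)) / 2 = m by omega,
      show ((L : ℤ) + -A - -(B + 1)) / 2 = m - (A - B) by omega,
      show (((L + 1 : ℕ) : ℤ) + A - B) / 2 = m by push_cast; omega,
      ← gauss_sub_right t L (m - (A - B)), show (L : ℤ) - (m - (A - B)) = m - 1 by omega,
      Nat.cast_succ, gauss_succ t hqp]
    have e1 : 2 * ((L : ℤ) + 1) + (A - (B - 1)) * (A - (B - 1) - 1)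
        = (A - B) * (A - B - 1) + 4 * m := by linear_combination 2 * hm
    have e2 : (-A - -(B + 1)) * (-A - -(B + 1) - 1) = (A - B) * (A - B - 1) := by ring
    rw [e2, ← mul_assoc, ← zpow_add₀ ht, e1, zpow_add₀ ht]
    ring

theorem finsum_pathTerm_eq_pathGF (t : K) (L : ℕ) (A B : ℤ) :
    ∑ᶠ σ : Fin (L + 2) → ℤ, pathTerm t L A B (extendNat 0 σ) = pathGF t L A B := by
  refine (finsum_eq_sum_comp_of_support_subset_range (walk_injective (A := A) (L + 1)) ?_).trans
    (sum_congr rfl fun ε _ => pathTerm_congr fun j hj => ?_)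
  · intro σ hσ
    obtain ⟨hsteps, h0, -⟩ : (∀ j, j ≤ L → |extendNat 0 σ (j + 1) - extendNat 0 σ j| = 1)
        ∧ extendNat 0 σ 0 = A ∧ _ := by
      by_contra hc
      exact hσ (if_neg hc)
    obtain ⟨ε, hε⟩ := exists_walk_eq (n := L + 1) fun j hj => hsteps j (by omega)
    refine ⟨ε, funext fun j => ?_⟩
    rw [← h0]
    simpa [extendNat, Nat.le_of_lt_succ j.isLt] using hε j (by omega)
  · simp [extendNat, show j < L + 2 by omega]

end UnrestrictedPath

open UnrestrictedPath

theorem unrestricted_paths_general (a b L : ℕ)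
    (hL : ((L : ℤ) - ((a : ℤ) - b)) % 2 = 0) :
    (∑ᶠ σ : Fin (L + 2) → ℤ,
      (fun s : ℕ → ℤ =>
        if (∀ j, j ≤ L → |s (j + 1) - s j| = 1) ∧
            s 0 = (a : ℤ) - 1 ∧ s L = (b : ℤ) - 1 ∧ s (L + 1) = (b : ℤ)
        then (RatFunc.X : RatFunc ℚ) ^ (∑ k ∈ Finset.Icc 1 L, (k : ℤ) * |s (k + 1) - s (k - 1)|)
        else 0)
      (fun j => if h : j < L + 2 then σ ⟨j, h⟩ else 0))
      = (RatFunc.X : RatFunc ℚ) ^ (((a : ℤ) - b) * ((a : ℤ) - b - 1))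
          * gauss RatFunc.X (L : ℤ) (((L : ℤ) + a - b) / 2) := by
  calc _ = ∑ᶠ σ : Fin (L + 2) → ℤ, pathTerm RatFunc.X L (a - 1) (b - 1) (extendNat 0 σ) :=
        finsum_congr fun σ => by simp only [pathTerm, weight, extendNat, sub_add_cancel]
    _ = pathGF RatFunc.X L (a - 1) (b - 1) := finsum_pathTerm_eq_pathGF ..
    _ = _ := by
      rw [pathGF_eq RatFunc.X_ne_zero qp_X_ne_zero L _ _ (by omega), sub_sub_sub_cancel_right]
      congr 3
      ring

/-- **Generating function of unrestricted lattice paths**: the paths run from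
`σ_0 = a-1` through `σ_L = b-1`, `σ_{L+1} = b` with steps `±1` and unbounded
integer heights; stated in the variable `t = q^{1/4}` (exponents multiplied by `4`). -/
theorem unrestricted_paths (a b L : ℕ) (ha : 1 ≤ a) (hb : 1 ≤ b)
    (hL : ((L : ℤ) - ((a : ℤ) - b)) % 2 = 0) :
    (∑ᶠ σ : Fin (L + 2) → ℤ,
      (fun s : ℕ → ℤ =>
        if (∀ j, j ≤ L → |s (j + 1) - s j| = 1) ∧
            s 0 = (a : ℤ) - 1 ∧ s L = (b : ℤ) - 1 ∧ s (L + 1) = (b : ℤ)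
        then (RatFunc.X : RatFunc ℚ) ^ (∑ k ∈ Finset.Icc 1 L, (k : ℤ) * |s (k + 1) - s (k - 1)|)
        else 0)
      (fun j => if h : j < L + 2 then σ ⟨j, h⟩ else 0))
      = (RatFunc.X : RatFunc ℚ) ^ (((a : ℤ) - b) * ((a : ℤ) - b - 1))
          * gauss RatFunc.X (L : ℤ) (((L : ℤ) + a - b) / 2) :=
  unrestricted_paths_general a b L hL
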